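/- arXiv:math/9310204 — 5 statements merged into one kernel-verified Lean document; each statement's English description precedes it below -/
import Mathlib

section
/- If H₁ and H₂ are subgroups of a group G with a fixed finite generating set, and T₁, T₂, T are minimal Schreier transversals (sets of coset representatives of minimal word length) for H₁, H₂, and H₁ ∩ H₂ respectively, then for every n the number of elements of T of length ≤ n is at most the product of the number of elements of T₁ of length ≤ n and the number of elements of T₂ of length ≤ n; i.e., Γ_{G/(H₁∩H₂)}(n) ≤ Γ_{G/H₁}(n) · Γ_{G/H₂}(n). -/
/-- The ball of radius `n` in `G` with respect to the generating set `S`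
(words of length at most `n` in `S ∪ S⁻¹`). -/
def wordBall {G : Type*} [Group G] (S : Set G) (n : ℕ) : Set G :=
  {g | ∃ l : List G, l.length ≤ n ∧ (∀ x ∈ l, x ∈ S ∨ x⁻¹ ∈ S) ∧ l.prod = g}

/-- The word length of `g` with respect to the generating set `S`. -/
noncomputable def wordLength {G : Type*} [Group G] (S : Set G) (g : G) : ℕ :=
  sInf {n | g ∈ wordBall S n}

/-- The growth function of `G` with respect to `S`. -/
noncomputable def growth {G : Type*} [Group G] (S : Set G) (n : ℕ) : ℕ :=
  (wordBall S n).ncard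

/-- The cogrowth function of a subgroup `H ≤ G`: the number of right cosets `Hg`
containing an element of word length at most `n`. -/
noncomputable def cogrowth {G : Type*} [Group G] (S : Set G) (H : Subgroup G) (n : ℕ) : ℕ :=
  ((fun g => Quotient.mk (QuotientGroup.rightRel H) g) '' wordBall S n).ncard

/-- A subgroup is essential if it intersects every nontrivial subgroup nontrivially. -/
def Essential {G : Type*} [Group G] (H : Subgroup G) : Prop :=
  ∀ K : Subgroup G, K ≠ ⊥ → H ⊓ K ≠ ⊥

/-!
Sending a coset `(H₁ ⊓ H₂) g` to the pair `(H₁ g, H₂ g)` is injective, and it maps the cosets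
meeting the ball of radius `n` into the product of the sets of `H₁`- and `H₂`-cosets meeting it.
-/

namespace Setoid

variable {α : Type*}

def quotientInfToProd (r₁ r₂ : Setoid α) : Quotient (r₁ ⊓ r₂) → Quotient r₁ × Quotient r₂ :=
  Quotient.lift (fun a => (Quotient.mk r₁ a, Quotient.mk r₂ a)) fun _ _ h =>
    Prod.ext (Quotient.sound (inf_iff_and.mp h).1) (Quotient.sound (inf_iff_and.mp h).2)

theorem quotientInfToProd_injective (r₁ r₂ : Setoid α) :
    Function.Injective (quotientInfToProd r₁ r₂) := by
  rintro ⟨a⟩ ⟨b⟩ h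
  obtain ⟨h₁, h₂⟩ := Prod.ext_iff.mp h
  exact Quotient.sound (inf_iff_and.mpr ⟨Quotient.exact h₁, Quotient.exact h₂⟩)

theorem ncard_image_mk_inf_le (r₁ r₂ : Setoid α) (A : Set α) :
    (Quotient.mk (r₁ ⊓ r₂) '' A).ncard ≤
      (Quotient.mk r₁ '' A).ncard * (Quotient.mk r₂ '' A).ncard := by
  set pair := quotientInfToProd r₁ r₂
  rcases (Quotient.mk (r₁ ⊓ r₂) '' A).finite_or_infinite with hfin | hinf
  · -- the two factors are projections of the finite left-hand set, so the product is finite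
    have fst_image : (fun q => (pair q).1) '' (Quotient.mk _ '' A) = Quotient.mk r₁ '' A :=
      Set.image_image _ _ _
    have snd_image : (fun q => (pair q).2) '' (Quotient.mk _ '' A) = Quotient.mk r₂ '' A :=
      Set.image_image _ _ _
    rw [← Set.ncard_prod]
    refine Set.ncard_le_ncard_of_injOn pair ?_ (quotientInfToProd_injective r₁ r₂).injOn
      ((fst_image ▸ hfin.image _).prod (snd_image ▸ hfin.image _))
    rintro _ ⟨a, ha, rfl⟩
    exact ⟨⟨a, ha, rfl⟩, ⟨a, ha, rfl⟩⟩
  · rw [hinf.ncard]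
    exact Nat.zero_le _

end Setoid

theorem QuotientGroup.rightRel_inf {G : Type*} [Group G] (H₁ H₂ : Subgroup G) :
    rightRel (H₁ ⊓ H₂) = rightRel H₁ ⊓ rightRel H₂ :=
  Setoid.ext fun _ _ => by
    simp only [Setoid.inf_iff_and, rightRel_apply, Subgroup.mem_inf]

theorem cogrowth_inf_le_general {G : Type*} [Group G] (S : Set G) (H₁ H₂ : Subgroup G) (n : ℕ) :
    cogrowth S (H₁ ⊓ H₂) n ≤ cogrowth S H₁ n * cogrowth S H₂ n := by
  unfold cogrowth
  rw [QuotientGroup.rightRel_inf]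
  exact Setoid.ncard_image_mk_inf_le _ _ _

/-- The cogrowth of the intersection of two subgroups is bounded by the product
of the cogrowths. -/
theorem cogrowth_inf_le {G : Type*} [Group G] (S : Set G) (hS : S.Finite)
    (hgen : Subgroup.closure S = ⊤) (H₁ H₂ : Subgroup G) (n : ℕ) :
    cogrowth S (H₁ ⊓ H₂) n ≤ cogrowth S H₁ n * cogrowth S H₂ n :=
  cogrowth_inf_le_general S H₁ H₂ n
end

section
/- Let G be a group with finite generating set, H₁, H₂ ≤ G subgroups, and suppose there exists n such that Γ_{G/H₁}(n) · Γ_{G/H₂}(n) < Γ_G(n), where Γ_G(n) is the number of elements of G of length ≤ n and Γ_{G/Hᵢ} are cogrowth functions. Then H₁ ∩ H₂ is nontrivial. -/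
open Pointwise


lemma wordBall_finite {G : Type*} [Group G] (S : Set G) (hS : S.Finite) (n : ℕ) :
    (wordBall S n).Finite := by
  induction n with
  | zero =>
      apply Set.Finite.subset (Set.finite_singleton (1 : G))
      rintro g ⟨l, hl, -, rfl⟩
      simp_all [List.length_eq_zero_iff.mp (Nat.le_zero.mp hl)]
  | succ n ih =>
      have : wordBall S (n + 1) ⊆ wordBall S n ∪ (S ∪ S⁻¹) * wordBall S n := by
        rintro g ⟨l, hl, hmem, rfl⟩
        cases l with
        | nil => exact Or.inl ⟨[], by simp, by simp, by simp⟩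
        | cons x t =>
            right
            refine ⟨x, ?_, t.prod, ⟨t, ?_, fun y hy => hmem y (List.mem_cons_of_mem _ hy), rfl⟩, by simp⟩
            · rcases hmem x List.mem_cons_self with hx | hx
              · exact Or.inl hx
              · exact Or.inr (by simpa using hx)
            · simpa using Nat.lt_succ_iff.mp (Nat.lt_of_lt_of_le (Nat.lt_succ_self _) hl)
      exact Set.Finite.subset ((ih.union ((hS.union hS.inv).mul ih))) this

lemma ncard_prod' {α β : Type*} (s : Set α) (t : Set β) :
    (s ×ˢ t).ncard = s.ncard * t.ncard := by
  rw [← Nat.card_coe_set_eq, ← Nat.card_coe_set_eq, ← Nat.card_coe_set_eq,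
    ← Nat.card_prod]
  exact Nat.card_congr (Equiv.Set.prod s t)

/-- If for some `n` the product of the cogrowths of `H₁` and `H₂` is smaller than
the growth of `G`, then `H₁ ∩ H₂` is nontrivial. -/
theorem inf_ne_bot_of_cogrowth_mul_lt {G : Type*} [Group G] (S : Set G) (hS : S.Finite)
    (hgen : Subgroup.closure S = ⊤) (H₁ H₂ : Subgroup G)
    (h : ∃ n, cogrowth S H₁ n * cogrowth S H₂ n < growth S n) :
    H₁ ⊓ H₂ ≠ ⊥ := by
  intro hbot
  obtain ⟨n, hn⟩ := h
  set B := wordBall S n with hB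
  have hBfin : B.Finite := wordBall_finite S hS n
  set q₁ : G → Quotient (QuotientGroup.rightRel H₁) := fun g => Quotient.mk _ g
  set q₂ : G → Quotient (QuotientGroup.rightRel H₂) := fun g => Quotient.mk _ g
  set f : G → Quotient (QuotientGroup.rightRel H₁) × Quotient (QuotientGroup.rightRel H₂) :=
    fun g => (q₁ g, q₂ g)
  have hinj : Set.InjOn f B := by
    intro a _ b _ hab
    have h1 : b * a⁻¹ ∈ H₁ := by
      have := congrArg Prod.fst hab
      exact QuotientGroup.rightRel_apply.mp (Quotient.exact this)
    have h2 : b * a⁻¹ ∈ H₂ := by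
      have := congrArg Prod.snd hab
      exact QuotientGroup.rightRel_apply.mp (Quotient.exact this)
    have : b * a⁻¹ ∈ H₁ ⊓ H₂ := ⟨h1, h2⟩
    rw [hbot, Subgroup.mem_bot] at this
    have : b = a := by
      have := mul_inv_eq_one.mp this
      exact this
    exact this.symm
  have hsub : f '' B ⊆ (q₁ '' B) ×ˢ (q₂ '' B) := by
    rintro _ ⟨g, hg, rfl⟩
    exact ⟨⟨g, hg, rfl⟩, ⟨g, hg, rfl⟩⟩
  have hfin : ((q₁ '' B) ×ˢ (q₂ '' B)).Finite := (hBfin.image q₁).prod (hBfin.image q₂)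
  have key : B.ncard ≤ (q₁ '' B).ncard * (q₂ '' B).ncard := by
    rw [← Set.ncard_image_of_injOn hinj, ← ncard_prod']
    exact Set.ncard_le_ncard hsub hfin
  have : growth S n ≤ cogrowth S H₁ n * cogrowth S H₂ n := key
  omega
end

section
/- Let G be a finitely generated free group. A subgroup H ≤ G has finite index in G if and only if H is finitely generated and essential. -/
namespace FGEss

open FreeGroup List

variable {α : Type*}

/-- Two letters that do not cancel each other. -/
def NC (a b : α × Bool) : Prop := ¬(a.1 = b.1 ∧ a.2 = !b.2)

variable [DecidableEq α]

theorem reduce_eq_of_chain' : ∀ {L : List (α × Bool)}, Chain' NC L → reduce L = L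
  | [], _ => rfl
  | x :: t, h => by
    have ht : reduce t = t := reduce_eq_of_chain' h.tail
    rw [reduce.cons, ht]
    cases t with
    | nil => rfl
    | cons hd tl =>
      dsimp only
      rw [if_neg]
      exact (List.isChain_cons_cons.1 h).1

theorem chain'_of_reduce_eq : ∀ {L : List (α × Bool)}, reduce L = L → Chain' NC L
  | [], _ => List.isChain_nil
  | x :: t, h => by
    rw [reduce.cons] at h
    rcases ht : reduce t with _ | ⟨hd, tl⟩
    · rw [ht] at h
      have ht' : t = [] := by
        have := h
        simp only [List.cons.injEq] at this
        exact this.2.symm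
      subst ht'
      exact List.isChain_singleton x
    · rw [ht] at h
      dsimp only at h
      by_cases hc : x.1 = hd.1 ∧ x.2 = !hd.2
      · rw [if_pos hc] at h
        exfalso
        have h1 : (reduce t).length ≤ t.length := Red.length_le reduce.red
        rw [ht] at h1
        have h2 : tl.length = t.length + 1 := by
          conv_lhs => rw [h]
          simp
        simp only [List.length_cons] at h1
        omega
      · rw [if_neg hc] at h
        have h2 : t = hd :: tl := by
          have := h
          simp only [List.cons.injEq] at this
          exact this.2.symm
        subst h2
        exact List.isChain_cons_cons.2 ⟨hc, chain'_of_reduce_eq ht⟩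

theorem invRev_cons (b : α × Bool) (v : List (α × Bool)) :
    invRev (b :: v) = invRev v ++ [(b.1, !b.2)] := by
  simp [invRev]

theorem reduce_append {L₁ : List (α × Bool)} (h : Chain' NC L₁) {L₂} (h₂ : reduce L₂ = L₂) :
    ∃ u v w, L₁ = u ++ v ∧ L₂ = invRev v ++ w ∧ reduce (L₁ ++ L₂) = u ++ w := by
  induction L₁ with
  | nil => exact ⟨[], [], L₂, rfl, by simp [invRev_empty], by simpa using h₂⟩
  | cons b t ih =>
    obtain ⟨u, v, w, h1, h2, h3⟩ := ih h.tail
    have hred : reduce (b :: t ++ L₂) =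
        List.casesOn (u ++ w) [b] fun hd tl =>
          if b.1 = hd.1 ∧ b.2 = !hd.2 then tl else b :: hd :: tl := by
      rw [List.cons_append, reduce.cons, h3]
    cases u with
    | cons u₀ u' =>
      have hbu : NC b u₀ := by
        rw [h1] at h
        exact (List.isChain_cons_cons.1 h).1
      refine ⟨b :: u₀ :: u', v, w, by simp [h1], h2, ?_⟩
      rw [hred]
      dsimp only [List.cons_append]
      rw [if_neg hbu]
    | nil =>
      simp only [List.nil_append] at h1 h3 hred
      subst h1
      cases w with
      | nil =>
        exact ⟨[b], t, [], rfl, by simpa using h2, by simpa using hred⟩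
      | cons w₀ w' =>
        by_cases hc : b.1 = w₀.1 ∧ b.2 = !w₀.2
        · refine ⟨[], b :: t, w', rfl, ?_, ?_⟩
          · rw [invRev_cons, h2]
            have : w₀ = (b.1, !b.2) := by
              obtain ⟨hc1, hc2⟩ := hc
              ext
              · exact hc1.symm
              · simp [hc2]
            rw [this]
            simp
          · rw [hred]
            dsimp only
            rw [if_pos hc]
            rfl
        · refine ⟨[b], t, w₀ :: w', rfl, h2, ?_⟩
          rw [hred]
          dsimp only
          rw [if_neg hc]
          rfl


theorem chain'_toWord (x : FreeGroup α) : Chain' NC x.toWord :=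
  chain'_of_reduce_eq (reduce_toWord x)

theorem toWord_mul_decomp (x y : FreeGroup α) :
    ∃ u v w, x.toWord = u ++ v ∧ y.toWord = invRev v ++ w ∧ (x * y).toWord = u ++ w := by
  obtain ⟨u, v, w, h1, h2, h3⟩ := reduce_append (chain'_toWord x) (reduce_toWord y)
  refine ⟨u, v, w, h1, h2, ?_⟩
  have hxy : x * y = mk (x.toWord ++ y.toWord) := by
    rw [← mul_mk, mk_toWord, mk_toWord]
  rw [hxy, toWord_mk, h3]

theorem norm_toWord (x : FreeGroup α) : norm x = x.toWord.length := rfl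

/-- Quasiconvexity of finitely generated subgroups of free groups. -/
theorem quasiconvex (S : Finset (FreeGroup α)) (l : List (FreeGroup α))
    (hl : ∀ y ∈ l, y ∈ S ∨ y⁻¹ ∈ S) {p q : List (α × Bool)}
    (hpq : l.prod.toWord = p ++ q) :
    ∃ h', h' ∈ Subgroup.closure (S : Set (FreeGroup α)) ∧
      norm (h'⁻¹ * mk p) ≤ S.sup norm := by
  induction l using List.reverseRecOn generalizing p q with
  | nil =>
    simp only [List.prod_nil, toWord_one] at hpq
    have hp : p = [] := by
      rcases List.append_eq_nil_iff.1 hpq.symm with ⟨hp, -⟩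
      exact hp
    subst hp
    refine ⟨1, one_mem _, ?_⟩
    rw [← one_eq_mk]
    simp [FreeGroup.norm_one]
  | append_singleton l' s ih =>
    rw [List.prod_append, List.prod_singleton] at hpq
    obtain ⟨u, v, w, h1, h2, h3⟩ := toWord_mul_decomp l'.prod s
    rw [h3] at hpq
    have hl' : ∀ y ∈ l', y ∈ S ∨ y⁻¹ ∈ S := fun y hy => hl y (by simp [hy])
    have hsS : s ∈ S ∨ s⁻¹ ∈ S := hl s (by simp)
    rcases List.append_eq_append_iff.1 hpq.symm with ⟨a, ha1, ha2⟩ | ⟨c, hc1, hc2⟩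
    · -- u = p ++ a : p is a prefix of l'.prod.toWord
      refine ih hl' (p := p) (q := a ++ v) ?_
      rw [h1, ha1, List.append_assoc]
    · -- p = u ++ c, w = c ++ q
      have hmem : l'.prod ∈ Subgroup.closure (S : Set (FreeGroup α)) := by
        refine list_prod_mem fun y hy => ?_
        rcases hl' y hy with h | h
        · exact Subgroup.subset_closure h
        · exact (inv_mem_iff).1 (Subgroup.subset_closure h)
      refine ⟨l'.prod, hmem, ?_⟩
      have hx : l'.prod = mk u * mk v := by
        conv_lhs => rw [← mk_toWord (x := l'.prod), h1, ← mul_mk]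
      have hp : mk p = mk u * mk c := by rw [hc1, ← mul_mk]
      have key : l'.prod⁻¹ * mk p = (mk v)⁻¹ * mk c := by
        rw [hx, hp, mul_inv_rev]
        group
      rw [key]
      have hle1 : norm ((mk v)⁻¹ * mk c) ≤ v.length + c.length := by
        rw [inv_mk, mul_mk]
        refine le_trans norm_mk_le ?_
        simp [invRev_length]
      have hns : norm s = v.length + w.length := by
        rw [norm_toWord, h2]
        simp [invRev_length]
      have hcw : c.length ≤ w.length := by
        have : w = c ++ q := hc2
        simp [this]
      have hsle : norm s ≤ S.sup norm := by
        rcases hsS with h | h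
        · exact Finset.le_sup h
        · rw [← norm_inv_eq]
          exact Finset.le_sup h
      omega

theorem finite_ball [Finite α] (n : ℕ) : {x : FreeGroup α | norm x ≤ n}.Finite := by
  have : Finite (α × Bool) := inferInstance
  refine Set.Finite.of_finite_image (f := toWord) ?_ toWord_injective.injOn
  refine (List.finite_length_le (α × Bool) n).subset ?_
  rintro _ ⟨x, hx, rfl⟩
  exact hx

/-- Powers of a nontrivial element with noncancelling ends stay nontrivial. -/
theorem pow_ne_one_aux : ∀ (N : ℕ) (w : FreeGroup α), norm w ≤ N → w ≠ 1 →
    ∀ n : ℕ, 0 < n → w ^ n ≠ 1 := by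
  intro N
  induction N with
  | zero =>
    intro w hw hw1
    exact absurd (norm_eq_zero.1 (Nat.le_zero.1 hw)) hw1
  | succ N ih =>
    intro w hw hw1 n hn
    have hL : w.toWord ≠ [] := fun h => hw1 (toWord_eq_nil_iff.1 h)
    obtain ⟨x, t, hxt⟩ : ∃ x t, w.toWord = x :: t := by
      cases hh : w.toWord with
      | nil => exact absurd hh hL
      | cons x t => exact ⟨x, t, rfl⟩
    rcases List.eq_nil_or_concat w.toWord with h | ⟨M, y, hMy⟩
    · exact absurd h hL
    rw [List.concat_eq_append] at hMy
    by_cases hc : y.1 = x.1 ∧ y.2 = !x.2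
    · -- cancellation at the wrap: w is conjugate to a shorter element
      obtain ⟨M', hM'⟩ : ∃ M', M = x :: M' := by
        cases M with
        | nil =>
          rw [hMy] at hxt
          simp only [List.nil_append, List.cons.injEq] at hxt
          obtain ⟨h1, -⟩ := hxt
          rw [← h1] at hc
          simp at hc
        | cons m M' =>
          rw [hMy] at hxt
          simp only [List.cons_append, List.cons.injEq] at hxt
          exact ⟨M', by rw [hxt.1]⟩
      rw [hM'] at hMy
      have hy : y = (x.1, !x.2) := by
        ext
        · exact hc.1
        · rw [hc.2]
      have hw' : w = mk [x] * mk M' * (mk [x])⁻¹ := by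
        conv_lhs => rw [← mk_toWord (x := w), hMy]
        rw [inv_mk, mul_mk, mul_mk]
        refine congrArg mk ?_
        simp [invRev, hy]
      have hM'1 : mk M' ≠ 1 := by
        intro h
        rw [h, mul_one, mul_inv_cancel] at hw'
        exact hw1 hw'
      have hM'norm : norm (mk M') ≤ N := by
        have h1 : norm (mk M') ≤ M'.length := norm_mk_le
        have h2 : w.toWord.length = M'.length + 2 := by
          rw [hMy]
          simp
        rw [norm_toWord] at hw
        omega
      have hpow := ih (mk M') hM'norm hM'1 n hn
      intro h
      rw [hw', conj_pow] at h
      apply hpow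
      rw [mul_inv_eq_one] at h
      rwa [mul_eq_left] at h
    · -- w is cyclically reduced
      have hchain : ∀ m : ℕ, Chain' NC (List.flatten (List.replicate m w.toWord)) := by
        intro m
        induction m with
        | zero => exact List.isChain_nil
        | succ m ihm =>
          rw [List.replicate_succ, List.flatten_cons]
          refine List.isChain_append.2 ⟨chain'_toWord w, ihm, ?_⟩
          intro a ha b hb
          have ha' : a = y := by
            rw [hMy] at ha
            rw [List.getLast?_concat] at ha
            exact (Option.some_inj.1 ha).symm
          have hb' : b = x := by
            cases m with
            | zero => simp at hb
            | succ m =>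
              rw [List.replicate_succ, List.flatten_cons, hxt] at hb
              simp only [List.cons_append, List.head?_cons] at hb
              exact (Option.some_inj.1 hb).symm
          rw [ha', hb']
          exact hc
      intro h
      have hwn : w ^ n = mk (List.flatten (List.replicate n w.toWord)) := by
        conv_lhs => rw [← mk_toWord (x := w)]
        rw [pow_mk]
      have htw : (w ^ n).toWord = List.flatten (List.replicate n w.toWord) := by
        rw [hwn, toWord_mk, reduce_eq_of_chain' (hchain n)]
      rw [h] at htw
      have : List.flatten (List.replicate n w.toWord) ≠ [] := by
        cases n with
        | zero => omega
        | succ n =>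
          rw [List.replicate_succ, List.flatten_cons, hxt]
          simp
      exact this (htw.symm.trans toWord_one)

theorem freeGroup_pow_ne_one {w : FreeGroup α} (hw : w ≠ 1) {n : ℕ} (hn : 0 < n) : w ^ n ≠ 1 :=
  pow_ne_one_aux (norm w) w le_rfl hw n hn

theorem index_ne_zero_of_subsingleton [Subsingleton α] (a : α) (H : Subgroup (FreeGroup α))
    (hH : H ≠ ⊥) : H.index ≠ 0 := by
  have htop : Subgroup.zpowers (FreeGroup.of a) = (⊤ : Subgroup (FreeGroup α)) := by
    rw [eq_top_iff, ← FreeGroup.closure_range_of α, Subgroup.closure_le]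
    rintro _ ⟨b, rfl⟩
    have hb : b = a := Subsingleton.elim b a
    rw [hb]
    exact Subgroup.mem_zpowers _
  obtain ⟨x, hxH, hx1⟩ : ∃ x ∈ H, x ≠ 1 := by
    by_contra hcon
    push_neg at hcon
    exact hH ((Subgroup.eq_bot_iff_forall H).2 hcon)
  have hxz : x ∈ Subgroup.zpowers (FreeGroup.of a) := by rw [htop]; trivial
  obtain ⟨k, hk⟩ := Subgroup.mem_zpowers_iff.1 hxz
  have hk0 : k ≠ 0 := by
    rintro rfl
    rw [zpow_zero] at hk
    exact hx1 hk.symm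
  have hk'0 : k.natAbs ≠ 0 := Int.natAbs_ne_zero.2 hk0
  haveI : NeZero k.natAbs := ⟨hk'0⟩
  set φ : FreeGroup α →* Multiplicative (ZMod k.natAbs) :=
    FreeGroup.lift fun _ => Multiplicative.ofAdd (1 : ZMod k.natAbs) with hφ
  have hker : φ.ker ≤ H := by
    intro g hg
    have hgz : g ∈ Subgroup.zpowers (FreeGroup.of a) := by rw [htop]; trivial
    obtain ⟨j, hj⟩ := Subgroup.mem_zpowers_iff.1 hgz
    have hφg : Multiplicative.toAdd (φ g) = (j : ZMod k.natAbs) := by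
      rw [← hj, map_zpow]
      have h1 : φ (FreeGroup.of a) = Multiplicative.ofAdd (1 : ZMod k.natAbs) :=
        FreeGroup.lift_apply_of
      rw [h1]
      simp [toAdd_zpow]
    have hg0 : (j : ZMod k.natAbs) = 0 := by
      rw [← hφg]
      rw [MonoidHom.mem_ker] at hg
      rw [hg]
      rfl
    have hdvd : (k.natAbs : ℤ) ∣ j := (ZMod.intCast_zmod_eq_zero_iff_dvd j k.natAbs).1 hg0
    have hdvd' : k ∣ j := Int.natAbs_dvd.1 hdvd
    obtain ⟨m, rfl⟩ := hdvd'
    rw [← hj, zpow_mul, hk]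
    exact zpow_mem hxH m
  have h1 : φ.ker.index ≠ 0 := by
    rw [Subgroup.index_ker]
    exact Nat.card_ne_zero.2 ⟨⟨1⟩, inferInstance⟩
  exact ne_zero_of_dvd_ne_zero h1 (Subgroup.index_dvd_of_le hker)

end FGEss

/-- In a finitely generated free group, a subgroup is of finite index iff it is
finitely generated and essential. -/
theorem finiteIndex_iff_fg_and_essential {α : Type*} [Finite α]
    (H : Subgroup (FreeGroup α)) :
    H.index ≠ 0 ↔ Subgroup.FG H ∧ Essential H := by
  classical
  open FreeGroup in
  cases isEmpty_or_nonempty α with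
  | inl hemp =>
    haveI : Subsingleton (FreeGroup α) := by
      refine ⟨fun a b => ?_⟩
      have key : ∀ x : FreeGroup α, x = 1 := by
        intro x
        rw [← toWord_eq_nil_iff (x := x)]
        cases hx : x.toWord with
        | nil => rfl
        | cons hd tl => exact (hemp.elim hd.1)
      rw [key a, key b]
    haveI : Finite (FreeGroup α) := Finite.of_subsingleton
    refine iff_of_true Subgroup.index_ne_zero_of_finite ⟨?_, ?_⟩
    · have : H = ⊥ := (Subgroup.eq_bot_iff_forall H).2 fun x _ => Subsingleton.elim x 1
      rw [this]
      exact ⟨∅, by simp⟩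
    · intro K hK
      exact absurd ((Subgroup.eq_bot_iff_forall K).2 fun x _ => Subsingleton.elim x 1) hK
  | inr hne =>
    constructor
    · intro hidx
      constructor
      · haveI : Group.FG (FreeGroup α) :=
          Group.fg_iff.2 ⟨Set.range FreeGroup.of, FreeGroup.closure_range_of α,
            Set.finite_range _⟩
        haveI : H.FiniteIndex := ⟨hidx⟩
        exact (Group.fg_iff_subgroup_fg H).1 inferInstance
      · intro K hK hbot
        obtain ⟨k, hkK, hk1⟩ : ∃ x ∈ K, x ≠ 1 := by
          by_contra hcon
          push_neg at hcon
          exact hK ((Subgroup.eq_bot_iff_forall K).2 hcon)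
        obtain ⟨n, hn, -, hknH⟩ := Subgroup.exists_pow_mem_of_index_ne_zero hidx k
        have hne1 : k ^ n ≠ 1 := FGEss.freeGroup_pow_ne_one hk1 hn
        have hmem : k ^ n ∈ H ⊓ K := ⟨hknH, pow_mem hkK n⟩
        rw [hbot, Subgroup.mem_bot] at hmem
        exact hne1 hmem
    · rintro ⟨hFG, hEss⟩
      cases subsingleton_or_nontrivial α with
      | inl hsub =>
        obtain ⟨a⟩ := id hne
        refine FGEss.index_ne_zero_of_subsingleton a H ?_
        intro hbot
        refine hEss ⊤ ?_ (by rw [inf_top_eq, hbot])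
        intro htop
        obtain ⟨x, y, hxy⟩ := exists_pair_ne (FreeGroup α)
        apply hxy
        have hx : x ∈ (⊥ : Subgroup (FreeGroup α)) := htop ▸ Subgroup.mem_top x
        have hy : y ∈ (⊥ : Subgroup (FreeGroup α)) := htop ▸ Subgroup.mem_top y
        rw [Subgroup.mem_bot] at hx hy
        rw [hx, hy]
      | inr hnontriv =>
        by_contra hidx
        obtain ⟨S, hS⟩ := hFG
        set C := S.sup FreeGroup.norm with hC
        haveI hinf : Infinite (Quotient (QuotientGroup.rightRel H)) := by
          have h0 : Nat.card (FreeGroup α ⧸ H) = 0 := hidx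
          rw [← Nat.card_congr (QuotientGroup.quotientRightRelEquivQuotientLeftRel H)] at h0
          rcases Nat.card_eq_zero.1 h0 with h | h
          · exact (h.false (Quotient.mk (QuotientGroup.rightRel H) 1)).elim
          · exact h
        have hfar : ∃ c : Quotient (QuotientGroup.rightRel H),
            ∀ x : FreeGroup α, Quotient.mk (QuotientGroup.rightRel H) x = c →
              C + 2 ≤ FreeGroup.norm x := by
          by_contra hcon
          push_neg at hcon
          have hsurj : ∀ c : Quotient (QuotientGroup.rightRel H),
              ∃ x : {y : FreeGroup α // FreeGroup.norm y ≤ C + 1},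
                Quotient.mk (QuotientGroup.rightRel H) x.1 = c := by
            intro c
            obtain ⟨x, hx1, hx2⟩ := hcon c
            exact ⟨⟨x, by omega⟩, hx1⟩
          haveI : Finite {y : FreeGroup α // FreeGroup.norm y ≤ C + 1} :=
            (FGEss.finite_ball (C + 1)).to_subtype
          haveI := Finite.of_surjective
            (fun x : {y : FreeGroup α // FreeGroup.norm y ≤ C + 1} =>
              Quotient.mk (QuotientGroup.rightRel H) x.1) hsurj
          exact not_finite (Quotient (QuotientGroup.rightRel H))
        obtain ⟨c, hc⟩ := hfar
        obtain ⟨g, hgc, hgmin⟩ : ∃ g, Quotient.mk (QuotientGroup.rightRel H) g = c ∧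
            ∀ x, Quotient.mk (QuotientGroup.rightRel H) x = c →
              FreeGroup.norm g ≤ FreeGroup.norm x := by
          obtain ⟨g₀, hg₀⟩ := Quotient.exists_rep c
          have hTne : {n : ℕ | ∃ x, Quotient.mk (QuotientGroup.rightRel H) x = c ∧
              FreeGroup.norm x = n}.Nonempty := ⟨FreeGroup.norm g₀, g₀, hg₀, rfl⟩
          obtain ⟨g, hgc, hgn⟩ := Nat.sInf_mem hTne
          refine ⟨g, hgc, fun x hx => ?_⟩
          rw [hgn]
          exact Nat.sInf_le ⟨x, hx, rfl⟩
        have hgC : C + 2 ≤ FreeGroup.norm g := hc g hgc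
        have hgne : g.toWord ≠ [] := by
          intro h
          have : FreeGroup.norm g = 0 := by
            rw [FGEss.norm_toWord, h]
            rfl
          omega
        rcases List.eq_nil_or_concat g.toWord with h | ⟨M, y, hMy⟩
        · exact hgne h
        rw [List.concat_eq_append] at hMy
        obtain ⟨i, hi⟩ : ∃ i : α, i ≠ y.1 := exists_ne y.1
        set z := g * FreeGroup.mk [(i, true)] * g⁻¹ with hz
        have hinvword : FreeGroup.invRev g.toWord = (y.1, !y.2) :: FreeGroup.invRev M := by
          rw [hMy]
          simp [FreeGroup.invRev]
        have hzpow : ∀ m : ℕ, 0 < m → (z ^ m).toWord =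
            g.toWord ++ (List.replicate m (i, true) ++ FreeGroup.invRev g.toWord) := by
          intro m hm
          have hzm : z ^ m =
              FreeGroup.mk (g.toWord ++ (List.replicate m (i, true) ++
                FreeGroup.invRev g.toWord)) := by
            rw [hz, conj_pow]
            have hp : (FreeGroup.mk [(i, true)]) ^ m =
                FreeGroup.mk (List.replicate m (i, true)) := by
              rw [FreeGroup.pow_mk]
              congr 1
              simp
            conv_lhs => rw [← FreeGroup.mk_toWord (x := g)]
            rw [hp, FreeGroup.inv_mk, FreeGroup.mul_mk, FreeGroup.mul_mk, List.append_assoc]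
          have hchain : List.Chain' FGEss.NC
              (g.toWord ++ (List.replicate m (i, true) ++ FreeGroup.invRev g.toWord)) := by
            refine List.isChain_append.2 ⟨FGEss.chain'_toWord g, ?_, ?_⟩
            · refine List.isChain_append.2 ⟨?_, ?_, ?_⟩
              · exact List.isChain_replicate_of_rel m (by simp [FGEss.NC])
              · have : FreeGroup.invRev g.toWord = (g⁻¹).toWord := (FreeGroup.toWord_inv g).symm
                rw [this]
                exact FGEss.chain'_toWord g⁻¹
              · intro a ha b hb
                have ha' : a = (i, true) := by
                  rw [List.getLast?_replicate] at ha
                  cases m with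
                  | zero => omega
                  | succ m =>
                    simp at ha
                    rw [ha]
                have hb' : b = (y.1, !y.2) := by
                  rw [hinvword] at hb
                  simp at hb
                  rw [hb]
                rw [ha', hb']
                simp [FGEss.NC]
                intro h
                exact absurd h hi
            · intro a ha b hb
              have ha' : a = y := by
                rw [hMy] at ha
                simp at ha
                exact ha.symm
              have hb' : b = (i, true) := by
                cases m with
                | zero => omega
                | succ m =>
                  rw [List.replicate_succ] at hb
                  simp at hb
                  rw [hb]
              rw [ha', hb']
              simp [FGEss.NC]
              intro h
              exact absurd h.symm hi
          rw [hzm, FreeGroup.toWord_mk, FGEss.reduce_eq_of_chain' hchain]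
        have hznotH : ∀ m : ℕ, 0 < m → z ^ m ∉ H := by
          intro m hm hmemH
          rw [← hS] at hmemH
          have hmem' : z ^ m ∈ Submonoid.closure ((S : Set (FreeGroup α)) ∪
              (S : Set (FreeGroup α))⁻¹) := by
            rw [← Subgroup.closure_toSubmonoid]
            exact hmemH
          obtain ⟨l, hl, hprod⟩ := Submonoid.exists_list_of_mem_closure hmem'
          have hl' : ∀ u ∈ l, u ∈ S ∨ u⁻¹ ∈ S := by
            intro u hu
            rcases hl u hu with h | h
            · exact Or.inl h
            · exact Or.inr (Set.mem_inv.1 h)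
          obtain ⟨h', hh', hnorm⟩ := FGEss.quasiconvex S l hl' (p := g.toWord)
            (q := List.replicate m (i, true) ++ FreeGroup.invRev g.toWord)
            (by rw [hprod, hzpow m hm])
          rw [FreeGroup.mk_toWord] at hnorm
          rw [hS] at hh'
          have hcos : Quotient.mk (QuotientGroup.rightRel H) (h'⁻¹ * g) = c := by
            rw [← hgc]
            refine Quotient.sound (QuotientGroup.rightRel_apply.mpr ?_)
            have heq : g * (h'⁻¹ * g)⁻¹ = h' := by group
            rw [heq]
            exact hh'
          have := hgmin _ hcos
          omega
        have hz1 : z ≠ 1 := by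
          intro h
          have h1 := hzpow 1 one_pos
          rw [pow_one, h, FreeGroup.toWord_one] at h1
          exact hgne (List.append_eq_nil_iff.1 h1.symm).1
        refine hEss (Subgroup.zpowers z) (by rwa [Ne, Subgroup.zpowers_eq_bot]) ?_
        rw [Subgroup.eq_bot_iff_forall]
        intro x hx
        obtain ⟨hxH, hxZ⟩ := Subgroup.mem_inf.1 hx
        obtain ⟨j, hj⟩ := Subgroup.mem_zpowers_iff.1 hxZ
        rcases lt_trichotomy j 0 with hjneg | rfl | hjpos
        · exfalso
          refine hznotH (-j).toNat (by omega) ?_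
          have : z ^ (-j).toNat = x⁻¹ := by
            rw [← zpow_natCast, Int.toNat_of_nonneg (by omega), ← hj, ← zpow_neg]
          rw [this]
          exact inv_mem hxH
        · rw [zpow_zero] at hj
          exact hj.symm
        · exfalso
          refine hznotH j.toNat (by omega) ?_
          have : z ^ j.toNat = x := by
            rw [← zpow_natCast, Int.toNat_of_nonneg (by omega), hj]
          rw [this]
          exact hxH
end

section
/- If G is a torsion-free group containing no non-cyclic abelian subgroup, then any two nontrivial normal subgroups H₁, H₂ ⊴ G intersect nontrivially. -/
/-- In a torsion-free group in which every abelian subgroup is cyclic, any two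
nontrivial normal subgroups intersect nontrivially. -/
theorem normal_inf_ne_bot {G : Type*} [Group G] (htf : ∀ g : G, g ≠ 1 → ¬IsOfFinOrder g)
    (hcyc : ∀ A : Subgroup G, (∀ x ∈ A, ∀ y ∈ A, x * y = y * x) →
      ∃ g : G, A = Subgroup.closure {g})
    (H₁ H₂ : Subgroup G) [H₁.Normal] [H₂.Normal] (h₁ : H₁ ≠ ⊥) (h₂ : H₂ ≠ ⊥) :
    H₁ ⊓ H₂ ≠ ⊥ := by
  obtain ⟨⟨x, hx⟩, hx1⟩ := Subgroup.ne_bot_iff_exists_ne_one.mp h₁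
  obtain ⟨⟨y, hy⟩, hy1⟩ := Subgroup.ne_bot_iff_exists_ne_one.mp h₂
  simp only [ne_eq, Subgroup.mk_eq_one] at hx1 hy1
  rw [Subgroup.ne_bot_iff_exists_ne_one]
  by_cases hc : x * y = y * x
  · -- abelian case
    have hcomm : ∀ a ∈ Subgroup.closure {x, y}, ∀ b ∈ Subgroup.closure {x, y},
        a * b = b * a := by
      intro a ha b hb
      refine Subgroup.closure_induction₂ (k := {x, y}) ?_ ?_ ?_ ?_ ?_ ?_ ?_ ha hb
      · rintro u v (rfl | rfl) (rfl | rfl) <;> simp [hc]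
      · simp
      · simp
      · intro u v w _ _ _ h1 h2
        rw [mul_assoc, h2, ← mul_assoc, h1, mul_assoc]
      · intro u v w _ _ _ h1 h2
        rw [← mul_assoc, h1, mul_assoc, h2, ← mul_assoc]
      · intro u v _ _ h
        exact (Commute.inv_left h).eq
      · intro u v _ _ h
        exact (Commute.inv_right h).eq
    obtain ⟨g, hg⟩ := hcyc _ hcomm
    have hxg : x ∈ Subgroup.closure {g} := by
      rw [← hg]; exact Subgroup.subset_closure (by simp)
    have hyg : y ∈ Subgroup.closure {g} := by
      rw [← hg]; exact Subgroup.subset_closure (by simp)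
    obtain ⟨a, ha⟩ := Subgroup.mem_closure_singleton.mp hxg
    obtain ⟨b, hb⟩ := Subgroup.mem_closure_singleton.mp hyg
    have ha0 : a ≠ 0 := by rintro rfl; simp at ha; exact hx1 ha.symm
    have hb0 : b ≠ 0 := by rintro rfl; simp at hb; exact hy1 hb.symm
    have key : x ^ b = y ^ a := by
      rw [← ha, ← hb, ← zpow_mul, ← zpow_mul, mul_comm]
    have hmem : x ^ b ∈ H₁ ⊓ H₂ := by
      refine ⟨Subgroup.zpow_mem _ hx b, ?_⟩
      rw [key]; exact Subgroup.zpow_mem _ hy a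
    refine ⟨⟨x ^ b, hmem⟩, ?_⟩
    simp only [ne_eq, Subgroup.mk_eq_one]
    intro h
    have : IsOfFinOrder x := by
      refine isOfFinOrder_iff_pow_eq_one.mpr ⟨b.natAbs, Int.natAbs_pos.mpr hb0, ?_⟩
      rcases Int.natAbs_eq b with he | he
      · rw [← zpow_natCast, ← he, h]
      · rw [← zpow_natCast, ← neg_neg (b.natAbs : ℤ), ← he, zpow_neg, h, inv_one]
    exact htf x hx1 this
  · -- noncommuting case: the commutator works
    refine ⟨⟨x * y * x⁻¹ * y⁻¹, ?_, ?_⟩, ?_⟩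
    · have : x * (y * x⁻¹ * y⁻¹) ∈ H₁ :=
        H₁.mul_mem hx (by simpa using Subgroup.Normal.conj_mem ‹H₁.Normal› _ (H₁.inv_mem hx) y)
      simpa [mul_assoc] using this
    · exact H₂.mul_mem (Subgroup.Normal.conj_mem ‹H₂.Normal› _ hy x) (H₂.inv_mem hy)
    · intro h
      apply hc
      have h' : x * y * x⁻¹ * y⁻¹ = 1 := Subtype.ext_iff.mp h
      rw [mul_inv_eq_one, mul_inv_eq_iff_eq_mul] at h'
      exact h'
end

section
/- Let R be a finitely generated associative unital K-algebra with filtration R^{(n)} by spans of monomials of length ≤ n, and let I be a right ideal of R. If the growth function Γ_I(n) = dim(I ∩ R^{(n)}) is not ≼ the cogrowth function Γ_{R/I}(n) = dim R^{(n)} − dim(I ∩ R^{(n)}) (in the preorder Γ₁ ≼ Γ₂ ⟺ ∃C > 0, ∀n, Γ₁(n) ≤ Γ₂(Cn)), then for every nonzero r ∈ R the right ideal quotient (I : r) = {s ∈ R : rs ∈ I} is nonzero. -/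
/-- `R^{(n)}`: the span of products of at most `n` elements of the generating set `X`. -/
def monomialSpan (K : Type*) {R : Type*} [Field K] [Ring R] [Algebra K R]
    (X : Set R) (n : ℕ) : Submodule K R :=
  Submodule.span K {r | ∃ l : List R, l.length ≤ n ∧ (∀ x ∈ l, x ∈ X) ∧ l.prod = r}

/-- The growth function of the algebra `R`: `Γ_R(n) = dim R^{(n)}`. -/
noncomputable def algGrowth (K : Type*) {R : Type*} [Field K] [Ring R] [Algebra K R]
    (X : Set R) (n : ℕ) : ℕ :=
  Module.finrank K ↥(monomialSpan K X n)

/-- The growth function of a right ideal (or subspace) `I`: `Γ_I(n) = dim (I ∩ R^{(n)})`. -/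
noncomputable def idealGrowth (K : Type*) {R : Type*} [Field K] [Ring R] [Algebra K R]
    (X : Set R) (I : Submodule K R) (n : ℕ) : ℕ :=
  Module.finrank K ↥(I ⊓ monomialSpan K X n)

/-- The cogrowth function of `I`: `Γ_{R/I}(n) = dim R^{(n)} - dim (I ∩ R^{(n)})`. -/
noncomputable def idealCogrowth (K : Type*) {R : Type*} [Field K] [Ring R] [Algebra K R]
    (X : Set R) (I : Submodule K R) (n : ℕ) : ℕ :=
  algGrowth K X n - idealGrowth K X I n

/-- A `K`-subspace of `R` which is a right ideal. -/
def IsRightIdeal (K : Type*) {R : Type*} [Field K] [Ring R] [Algebra K R]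
    (I : Submodule K R) : Prop :=
  ∀ a ∈ I, ∀ r : R, a * r ∈ I

/-- The preorder on growth functions: `f ≼ g` iff `f(n) ≤ g(Cn)` for some `C`. -/
def GrowthLE (f g : ℕ → ℕ) : Prop := ∃ C : ℕ, 0 < C ∧ ∀ n, f n ≤ g (C * n)

/-!
If `(I : r) = 0`, then `s ↦ r s + I` embeds `R` into `R / I`; for `r ∈ R^{(m)}` it sends `R^{(n)}`
into the image of `R^{(m + n)}`, whose dimension is `Γ_{R/I}(m + n)`. Hence
`Γ_I(n) ≤ Γ_R(n) ≤ Γ_{R/I}(m + n) ≤ Γ_{R/I}((m + 1) n)` for `n ≥ 1`, i.e. `Γ_I ≼ Γ_{R/I}`, against the hypothesis.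
At `n = 0` either `1 ∈ I`, so that `I = R` and `(I : r) = R`, or `I ∩ R^{(0)} = I ∩ K = 0`.
-/

open Module

theorem Submodule.finrank_map_mkQ_add_finrank_inf {K V : Type*} [Field K] [AddCommGroup V]
    [Module K V] (I W : Submodule K V) [FiniteDimensional K W] :
    finrank K (W.map I.mkQ) + finrank K ↥(I ⊓ W) = finrank K W := by
  have hker : Submodule.comap W.subtype (I ⊓ W) = Submodule.comap W.subtype I := by
    rw [Submodule.comap_inf, Submodule.comap_subtype_self, inf_top_eq]
  rw [← (I.mkQ.domRestrict W).finrank_range_add_finrank_ker, LinearMap.range_domRestrict,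
    LinearMap.ker_domRestrict, Submodule.ker_mkQ, ← hker,
    (Submodule.comapSubtypeEquivOfLe inf_le_right).finrank_eq]

section

variable {K R : Type*} [Field K] [Ring R] [Algebra K R]

theorem monomialSpan_mono (X : Set R) : Monotone (monomialSpan K X) := by
  intro m n hmn
  apply Submodule.span_mono
  rintro r ⟨l, hl, hX, rfl⟩
  exact ⟨l, hl.trans hmn, hX, rfl⟩

theorem monomialSpan_zero (X : Set R) : monomialSpan K X 0 = K ∙ 1 := by
  rw [monomialSpan]
  congr 1
  ext r
  simp [eq_comm]

theorem mul_mem_monomialSpan {X : Set R} {a b : R} {m n : ℕ}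
    (ha : a ∈ monomialSpan K X m) (hb : b ∈ monomialSpan K X n) :
    a * b ∈ monomialSpan K X (m + n) := by
  suffices monomialSpan K X m * monomialSpan K X n ≤ monomialSpan K X (m + n) from
    this (Submodule.mul_mem_mul ha hb)
  rw [monomialSpan, monomialSpan, Submodule.span_mul_span]
  apply Submodule.span_mono
  rintro _ ⟨_, ⟨l, hl, hlX, rfl⟩, _, ⟨l', hl', hl'X, rfl⟩, rfl⟩
  refine ⟨l ++ l', by simpa using Nat.add_le_add hl hl', ?_, List.prod_append⟩
  simpa only [List.mem_append, or_imp, forall_and] using ⟨hlX, hl'X⟩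

theorem exists_mem_monomialSpan_of_mem_adjoin {X : Set R} {r : R}
    (hr : r ∈ Algebra.adjoin K X) : ∃ m, r ∈ monomialSpan K X m := by
  have hdir := (monomialSpan_mono (K := K) X).directed_le
  suffices Subalgebra.toSubmodule (Algebra.adjoin K X) ≤ ⨆ n, monomialSpan K X n from
    (Submodule.mem_iSup_of_directed _ hdir).1 (this hr)
  rw [Algebra.adjoin_eq_span, Submodule.span_le]
  intro x hx
  obtain ⟨l, hlX, rfl⟩ := Submonoid.exists_list_of_mem_closure hx
  exact (Submodule.mem_iSup_of_directed _ hdir).2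
    ⟨l.length, Submodule.subset_span ⟨l, le_rfl, hlX, rfl⟩⟩

instance (X : Finset R) (n : ℕ) : FiniteDimensional K (monomialSpan K (X : Set R) n) := by
  refine FiniteDimensional.span_of_finite K ?_
  have hwords : {l : List X | l.length ≤ n}.Finite := List.finite_length_le X n
  refine (hwords.image fun l => (l.map (↑)).prod).subset ?_
  rintro _ ⟨l, hl, hlX, rfl⟩
  lift l to List X using hlX
  exact ⟨l, by simpa using hl, rfl⟩

theorem idealCogrowth_eq_finrank_map_mkQ (X : Finset R) (I : Submodule K R) (n : ℕ) :
    idealCogrowth K (X : Set R) I n = finrank K ((monomialSpan K (X : Set R) n).map I.mkQ) := by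
  rw [idealCogrowth, algGrowth, idealGrowth,
    ← I.finrank_map_mkQ_add_finrank_inf (monomialSpan K (X : Set R) n), Nat.add_sub_cancel]

theorem idealCogrowth_mono (X : Finset R) (I : Submodule K R) :
    Monotone (idealCogrowth K (X : Set R) I) := by
  intro m n hmn
  simp only [idealCogrowth_eq_finrank_map_mkQ]
  exact Submodule.finrank_mono (Submodule.map_mono (monomialSpan_mono _ hmn))

theorem idealGrowth_le_algGrowth (X : Finset R) (I : Submodule K R) (n : ℕ) :
    idealGrowth K (X : Set R) I n ≤ algGrowth K (X : Set R) n :=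
  Submodule.finrank_mono inf_le_right

theorem idealGrowth_zero (X : Set R) {I : Submodule K R} (h1 : (1 : R) ∉ I) :
    idealGrowth K X I 0 = 0 := by
  have hdisj : Disjoint I (K ∙ (1 : R)) :=
    Submodule.disjoint_span_singleton.2 fun h => absurd h h1
  rw [idealGrowth, monomialSpan_zero, hdisj.eq_bot, finrank_bot]

theorem algGrowth_le_idealCogrowth_add (X : Finset R) (I : Submodule K R) {r : R} {m : ℕ}
    (hm : r ∈ monomialSpan K (X : Set R) m) (hr : ∀ s, r * s ∈ I → s = 0) (n : ℕ) :
    algGrowth K (X : Set R) n ≤ idealCogrowth K (X : Set R) I (m + n) := by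
  set f := I.mkQ ∘ₗ LinearMap.mulLeft K r
  have hf : Function.Injective f := by
    rw [← LinearMap.ker_eq_bot, Submodule.eq_bot_iff]
    exact fun s hs => hr s ((Submodule.Quotient.mk_eq_zero I).1 hs)
  have hmap : (monomialSpan K (X : Set R) n).map f ≤
      (monomialSpan K (X : Set R) (m + n)).map I.mkQ := by
    rw [Submodule.map_comp]
    refine Submodule.map_mono ?_
    rintro _ ⟨s, hs, rfl⟩
    exact mul_mem_monomialSpan hm hs
  rw [algGrowth, idealCogrowth_eq_finrank_map_mkQ,
    (Submodule.equivMapOfInjective f hf _).finrank_eq]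
  exact Submodule.finrank_mono hmap

end

/-- If `Γ_I ⋠ Γ_{R/I}`, then every nonzero `r ∈ R` has nonzero right ideal quotient
`(I : r)`. -/
theorem quotient_ne_zero_of_growth {K R : Type*} [Field K] [Ring R] [Algebra K R]
    (X : Finset R) (hgen : Algebra.adjoin K (X : Set R) = ⊤)
    (I : Submodule K R) (hI : IsRightIdeal K I)
    (h : ¬ GrowthLE (idealGrowth K (X : Set R) I) (idealCogrowth K (X : Set R) I)) :
    ∀ r : R, r ≠ 0 → ∃ s : R, s ≠ 0 ∧ r * s ∈ I := by
  intro r hr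
  by_cases h1 : (1 : R) ∈ I
  · have : Nontrivial R := nontrivial_of_ne r 0 hr
    exact ⟨1, one_ne_zero, by simpa using hI 1 h1 r⟩
  by_contra! hcon
  have hker : ∀ s, r * s ∈ I → s = 0 := fun s hs => by_contra fun hs0 => hcon s hs0 hs
  obtain ⟨m, hm⟩ := exists_mem_monomialSpan_of_mem_adjoin (hgen ▸ Algebra.mem_top : r ∈ _)
  refine h ⟨m + 1, m.succ_pos, fun n => ?_⟩
  rcases n.eq_zero_or_pos with rfl | hn
  · simp [idealGrowth_zero _ h1]
  calc idealGrowth K (X : Set R) I n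
      ≤ algGrowth K (X : Set R) n := idealGrowth_le_algGrowth X I n
    _ ≤ idealCogrowth K (X : Set R) I (m + n) := algGrowth_le_idealCogrowth_add X I hm hker n
    _ ≤ idealCogrowth K (X : Set R) I ((m + 1) * n) := idealCogrowth_mono X I (by nlinarith)
end
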